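/- arXiv:math/0411288 — 2 statements merged into one kernel-verified Lean document; each statement's English description precedes it below -/
import Mathlib

section
/- Let ε_1,…,ε_n be independent Rademacher random variables and η_1,…,η_n independent standard normal random variables. Let Z = Σ a(j_1,…,j_k) ε_{j_1}⋯ε_{j_k} and Z̄ = Σ |a(j_1,…,j_k)| η_{j_1}⋯η_{j_k}, both sums running over all k-tuples of distinct indices. Then E[Z^{2M}] ≤ E[Z̄^{2M}] for every positive integer M. -/
/-!
Expanding the power of the chaos and using independence, each moment is a sum, over the ways of
choosing one index tuple per factor, of the product of the chosen coefficients times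
`∏_r E[X_r ^ m_r]`, where `m_r` counts the occurrences of the index `r`. Rademacher moments are
`1` or `0`, while Gaussian moments vanish in odd order and are at least `1` in even order, so each
Rademacher term is at most the corresponding Gaussian term with coefficients `|a|`.
-/

open MeasureTheory ProbabilityTheory Finset

section Expansion

variable {R ι κ : Type*} [CommSemiring R] [Fintype ι] [DecidableEq ι] [Fintype κ]

/-- A term of the expansion of `(∑ j, c j * ∏ l, x (j l)) ^ N` picks one index tuple `p i` per
factor `i`; this is the exponent of `x r` in that term. -/
def indexMultiplicity {N : ℕ} (p : Fin N → κ → ι) (r : ι) : ℕ :=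
  #{q : Fin N × κ | p q.1 q.2 = r}

theorem pow_sum_mul_prod_eq (x : ι → R) (c : (κ → ι) → R) (T : Finset (κ → ι)) (N : ℕ) :
    (∑ j ∈ T, c j * ∏ l, x (j l)) ^ N
      = ∑ p ∈ Fintype.piFinset fun _ : Fin N => T,
          (∏ i, c (p i)) * ∏ r, x r ^ indexMultiplicity p r := by
  rw [← Fin.prod_const, prod_univ_sum]
  refine sum_congr rfl fun p _ => ?_
  rw [prod_mul_distrib, ← Fintype.prod_prod_type' (fun i l => x (p i l)),
    ← prod_fiberwise univ (fun q : Fin N × κ => p q.1 q.2) (fun q => x (p q.1 q.2))]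
  refine congrArg _ (prod_congr rfl fun r _ => ?_)
  rw [prod_congr rfl fun q hq => congrArg x (mem_filter.1 hq).2, prod_const]
  rfl

end Expansion

namespace ProbabilityTheory

variable {Ω ι : Type*} [MeasurableSpace Ω] {μ : Measure Ω} [Fintype ι] {X : ι → Ω → ℝ}

theorem iIndepFun.integrable_fun_prod (hX : iIndepFun X μ) (hmeas : ∀ i, Measurable (X i))
    (hint : ∀ i, Integrable (X i) μ) : Integrable (fun ω => ∏ i, X i ω) μ := by
  refine ⟨aestronglyMeasurable_fun_prod _ fun i _ => (hmeas i).aestronglyMeasurable, ?_⟩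
  have hX_enorm : iIndepFun (fun i ω => ‖X i ω‖ₑ) μ :=
    hX.comp (fun _ x => ‖x‖ₑ) fun _ => measurable_enorm
  have h_enorm_prod : ∀ ω, ‖∏ i, X i ω‖ₑ = ∏ i, ‖X i ω‖ₑ := fun ω => by
    simp only [enorm_eq_nnnorm, nnnorm_prod, ENNReal.ofNNReal_finsetProd]
  simp only [HasFiniteIntegral, h_enorm_prod]
  rw [lintegral_prod_eq_prod_lintegral_of_indepFun _ _ hX_enorm fun i => (hmeas i).enorm]
  exact ENNReal.prod_lt_top fun i _ => (hint i).2

theorem iIndepFun.integral_prod_pow (hX : iIndepFun X μ) (hmeas : ∀ i, Measurable (X i))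
    (m : ι → ℕ) : ∫ ω, ∏ i, X i ω ^ m i ∂μ = ∏ i, ∫ ω, X i ω ^ m i ∂μ :=
  hX.integral_fun_prod_comp (f := fun i x => x ^ m i) (fun i => (hmeas i).aemeasurable)
    fun _ => by fun_prop

theorem iIndepFun.integrable_prod_pow (hX : iIndepFun X μ) (hmeas : ∀ i, Measurable (X i))
    (hint : ∀ i m, Integrable (fun ω => X i ω ^ m) μ) (m : ι → ℕ) :
    Integrable (fun ω => ∏ i, X i ω ^ m i) μ :=
  (hX.comp (fun i x => x ^ m i) fun _ => by fun_prop).integrable_fun_prod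
    (fun i => (hmeas i).pow_const _) fun i => hint i (m i)

end ProbabilityTheory

section Comparison

variable {Ω Ω' ι κ : Type*} [MeasurableSpace Ω] [MeasurableSpace Ω'] {μ : Measure Ω}
  {ν : Measure Ω'} [Fintype ι] [Fintype κ] {X : ι → Ω → ℝ} {Y : ι → Ω' → ℝ}

theorem integral_pow_sum_mul_prod [DecidableEq ι] (hX : iIndepFun X μ)
    (hmeas : ∀ i, Measurable (X i)) (hint : ∀ i m, Integrable (fun ω => X i ω ^ m) μ)
    (c : (κ → ι) → ℝ) (T : Finset (κ → ι)) (N : ℕ) :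
    ∫ ω, (∑ j ∈ T, c j * ∏ l, X (j l) ω) ^ N ∂μ
      = ∑ p ∈ Fintype.piFinset fun _ : Fin N => T,
          (∏ i, c (p i)) * ∏ r, ∫ ω, X r ω ^ indexMultiplicity p r ∂μ := by
  have h_expand (ω : Ω) := pow_sum_mul_prod_eq (fun r => X r ω) c T N
  simp only [h_expand]
  rw [integral_finsetSum _ fun p _ => (hX.integrable_prod_pow hmeas hint _).const_mul _]
  simp_rw [integral_const_mul, hX.integral_prod_pow hmeas]

theorem integral_pow_sum_mul_prod_le (hX : iIndepFun X μ) (hXmeas : ∀ i, Measurable (X i))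
    (hXint : ∀ i m, Integrable (fun ω => X i ω ^ m) μ) (hY : iIndepFun Y ν)
    (hYmeas : ∀ i, Measurable (Y i)) (hYint : ∀ i m, Integrable (fun ω => Y i ω ^ m) ν)
    (hdom : ∀ i m, |∫ ω, X i ω ^ m ∂μ| ≤ ∫ ω, Y i ω ^ m ∂ν)
    (c : (κ → ι) → ℝ) (T : Finset (κ → ι)) (N : ℕ) :
    ∫ ω, (∑ j ∈ T, c j * ∏ l, X (j l) ω) ^ N ∂μ
      ≤ ∫ ω, (∑ j ∈ T, |c j| * ∏ l, Y (j l) ω) ^ N ∂ν := by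
  classical
  rw [integral_pow_sum_mul_prod hX hXmeas hXint, integral_pow_sum_mul_prod hY hYmeas hYint]
  refine sum_le_sum fun p _ => ?_
  calc (∏ i, c (p i)) * ∏ r, ∫ ω, X r ω ^ indexMultiplicity p r ∂μ
      ≤ |(∏ i, c (p i)) * ∏ r, ∫ ω, X r ω ^ indexMultiplicity p r ∂μ| := le_abs_self _
    _ = (∏ i, |c (p i)|) * ∏ r, |∫ ω, X r ω ^ indexMultiplicity p r ∂μ| := by
      rw [abs_mul, abs_prod, abs_prod]
    _ ≤ (∏ i, |c (p i)|) * ∏ r, ∫ ω, Y r ω ^ indexMultiplicity p r ∂ν := by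
      gcongr with r
      exact hdom r _

end Comparison

section Rademacher

variable {Ω : Type*} [MeasurableSpace Ω] {μ : Measure Ω} [IsProbabilityMeasure μ] {X : Ω → ℝ}

theorem ae_eq_one_or_eq_neg_one_of_rademacher (hX : Measurable X)
    (h₁ : μ (X ⁻¹' {1}) = 1 / 2) (h₂ : μ (X ⁻¹' {-1}) = 1 / 2) :
    ∀ᵐ ω ∂μ, X ω = 1 ∨ X ω = -1 := by
  have hdisj : Disjoint (X ⁻¹' {1}) (X ⁻¹' {-1}) :=
    (Set.disjoint_singleton.2 (by norm_num)).preimage X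
  have hB := hX (measurableSet_singleton (-1 : ℝ))
  refine (ae_iff_measure_eq (p := fun ω => X ω = 1 ∨ X ω = -1)
    ((hX (measurableSet_singleton 1)).union hB).nullMeasurableSet).2 ?_
  change μ (X ⁻¹' {1} ∪ X ⁻¹' {-1}) = μ Set.univ
  rw [measure_union hdisj hB, h₁, h₂, ENNReal.add_halves, measure_univ]

theorem integrable_pow_of_rademacher (hX : Measurable X)
    (h₁ : μ (X ⁻¹' {1}) = 1 / 2) (h₂ : μ (X ⁻¹' {-1}) = 1 / 2) (m : ℕ) :
    Integrable (fun ω => X ω ^ m) μ := by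
  refine .of_bound (by fun_prop) 1 ?_
  filter_upwards [ae_eq_one_or_eq_neg_one_of_rademacher hX h₁ h₂] with ω hω
  rcases hω with h | h <;> simp [h]

theorem integral_pow_of_rademacher (hX : Measurable X)
    (h₁ : μ (X ⁻¹' {1}) = 1 / 2) (h₂ : μ (X ⁻¹' {-1}) = 1 / 2) (m : ℕ) :
    ∫ ω, X ω ^ m ∂μ = (1 + (-1) ^ m) / 2 := by
  have hA := hX (measurableSet_singleton (1 : ℝ))
  have hB := hX (measurableSet_singleton (-1 : ℝ))
  have h_indicator : (fun ω => X ω ^ m) =ᵐ[μ]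
      (X ⁻¹' {1}).indicator 1 + (X ⁻¹' {-1}).indicator fun _ => (-1) ^ m := by
    filter_upwards [ae_eq_one_or_eq_neg_one_of_rademacher hX h₁ h₂] with ω hω
    rcases hω with h | h <;> norm_num [Set.indicator, h]
  rw [integral_congr_ae h_indicator, integral_add' ((integrable_const 1).indicator hA)
      ((integrable_const _).indicator hB), integral_indicator_one hA,
    integral_indicator_const _ hB, measureReal_def, measureReal_def, h₁, h₂]
  simp only [one_div, ENNReal.toReal_inv, ENNReal.toReal_ofNat, smul_eq_mul]
  ring

end Rademacher

section Gaussian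

theorem integrable_pow_gaussianReal (μ : ℝ) (v : NNReal) (m : ℕ) :
    Integrable (fun x : ℝ => x ^ m) (gaussianReal μ v) :=
  (integrable_norm_iff (by fun_prop)).1 <| by
    simpa [norm_pow] using (memLp_id_gaussianReal (μ := μ) (v := v) m).integrable_norm_pow'

theorem integral_pow_gaussianReal_of_odd (v : NNReal) {m : ℕ} (hm : Odd m) :
    ∫ x, x ^ m ∂gaussianReal 0 v = 0 := by
  have h := integral_map (μ := gaussianReal 0 v) (φ := fun x => -x) (f := fun x => x ^ m)
    (by fun_prop) (by fun_prop)
  rw [gaussianReal_map_neg, neg_zero] at h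
  simp only [hm.neg_pow, integral_neg] at h
  linarith

theorem integral_sq_gaussianReal (v : NNReal) : ∫ x, x ^ 2 ∂gaussianReal 0 v = v := by
  simpa [variance_eq_integral measurable_id'.aemeasurable] using
    variance_fun_id_gaussianReal (μ := 0) (v := v)

theorem one_le_integral_pow_gaussianReal {m : ℕ} (hm : Even m) :
    1 ≤ ∫ x, x ^ m ∂gaussianReal 0 1 := by
  obtain ⟨p, rfl⟩ := hm
  have bernoulli (x : ℝ) : 1 + p * (x ^ 2 - 1) ≤ x ^ (p + p) := by
    have h := one_add_mul_le_pow (a := x ^ 2 - 1) (by nlinarith [sq_nonneg x]) p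
    rwa [add_sub_cancel, ← pow_mul, two_mul] at h
  have h_sq := integrable_pow_gaussianReal 0 1 2
  have h_lin : Integrable (fun x : ℝ => p * (x ^ 2 - 1)) (gaussianReal 0 1) :=
    (h_sq.sub (integrable_const 1)).const_mul _
  calc (1 : ℝ) = ∫ x, 1 + p * (x ^ 2 - 1) ∂gaussianReal 0 1 := by
        rw [integral_add (integrable_const 1) h_lin, integral_const_mul,
          integral_sub h_sq (integrable_const 1), integral_sq_gaussianReal]
        simp
    _ ≤ ∫ x, x ^ (p + p) ∂gaussianReal 0 1 :=
      integral_mono ((integrable_const 1).add h_lin) (integrable_pow_gaussianReal 0 1 _) bernoulli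

theorem abs_integral_pow_le_integral_pow_gaussianReal_of_rademacher {Ω : Type*}
    [MeasurableSpace Ω] {μ : Measure Ω} [IsProbabilityMeasure μ] {X : Ω → ℝ} (hX : Measurable X)
    (h₁ : μ (X ⁻¹' {1}) = 1 / 2) (h₂ : μ (X ⁻¹' {-1}) = 1 / 2) (m : ℕ) :
    |∫ ω, X ω ^ m ∂μ| ≤ ∫ x, x ^ m ∂gaussianReal 0 1 := by
  rw [integral_pow_of_rademacher hX h₁ h₂]
  rcases m.even_or_odd with hm | hm
  · rw [hm.neg_one_pow, show |((1 : ℝ) + 1) / 2| = 1 by norm_num]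
    exact one_le_integral_pow_gaussianReal hm
  · rw [hm.neg_one_pow, integral_pow_gaussianReal_of_odd 1 hm]
    norm_num

end Gaussian

theorem rademacher_moment_le_gaussian_moment_general
    (k n : ℕ)
    {Ω₁ : Type} [MeasurableSpace Ω₁] (μ₁ : Measure Ω₁) [IsProbabilityMeasure μ₁]
    {Ω₂ : Type} [MeasurableSpace Ω₂] (μ₂ : Measure Ω₂)
    (ε : Fin n → Ω₁ → ℝ)
    (hεmeas : ∀ j, Measurable (ε j))
    (hεindep : iIndepFun ε μ₁)
    (hrad : ∀ j, μ₁ (ε j ⁻¹' {1}) = 1/2 ∧ μ₁ (ε j ⁻¹' {-1}) = 1/2)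
    (η : Fin n → Ω₂ → ℝ)
    (hηmeas : ∀ j, Measurable (η j))
    (hηindep : iIndepFun η μ₂)
    (hgauss : ∀ j, Measure.map (η j) μ₂ = gaussianReal 0 1)
    (a : (Fin k → Fin n) → ℝ)
    (M : ℕ) :
    ∫ ω, (∑ j ∈ univ.filter (fun j : Fin k → Fin n => Function.Injective j),
        a j * ∏ l, ε (j l) ω) ^ (2 * M) ∂μ₁
      ≤ ∫ ω, (∑ j ∈ univ.filter (fun j : Fin k → Fin n => Function.Injective j),
          |a j| * ∏ l, η (j l) ω) ^ (2 * M) ∂μ₂ := by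
  have hη_integrable (j : Fin n) (m : ℕ) : Integrable (fun ω => η j ω ^ m) μ₂ := by
    have h := integrable_pow_gaussianReal 0 1 m
    rw [← hgauss j] at h
    exact (integrable_map_measure (g := fun x : ℝ => x ^ m) (by fun_prop) (hηmeas j).aemeasurable).1 h
  have hη_moment (j : Fin n) (m : ℕ) : ∫ ω, η j ω ^ m ∂μ₂ = ∫ x, x ^ m ∂gaussianReal 0 1 := by
    rw [← hgauss j, integral_map (hηmeas j).aemeasurable (by fun_prop)]
  refine integral_pow_sum_mul_prod_le hεindep hεmeas
    (fun j => integrable_pow_of_rademacher (hεmeas j) (hrad j).1 (hrad j).2) hηindep hηmeas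
    hη_integrable (fun j m => ?_) a _ _
  rw [hη_moment]
  exact abs_integral_pow_le_integral_pow_gaussianReal_of_rademacher (hεmeas j) (hrad j).1
    (hrad j).2 m

/-- **Lemma 1.** For independent Rademacher variables `ε_1,…,ε_n` and independent
standard normal variables `η_1,…,η_n`, with
`Z = Σ a(j_1,…,j_k) ε_{j_1}⋯ε_{j_k}` and `Z̄ = Σ |a(j_1,…,j_k)| η_{j_1}⋯η_{j_k}`
(sums over `k`-tuples of distinct indices), one has `E[Z^{2M}] ≤ E[Z̄^{2M}]`
for every positive integer `M`. -/
theorem rademacher_moment_le_gaussian_moment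
    (k n : ℕ) (hk : 0 < k) (hn : 0 < n)
    {Ω₁ : Type} [MeasurableSpace Ω₁] (μ₁ : Measure Ω₁) [IsProbabilityMeasure μ₁]
    {Ω₂ : Type} [MeasurableSpace Ω₂] (μ₂ : Measure Ω₂) [IsProbabilityMeasure μ₂]
    (ε : Fin n → Ω₁ → ℝ)
    (hεmeas : ∀ j, Measurable (ε j))
    (hεindep : iIndepFun ε μ₁)
    (hrad : ∀ j, μ₁ (ε j ⁻¹' {1}) = 1/2 ∧ μ₁ (ε j ⁻¹' {-1}) = 1/2)
    (η : Fin n → Ω₂ → ℝ)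
    (hηmeas : ∀ j, Measurable (η j))
    (hηindep : iIndepFun η μ₂)
    (hgauss : ∀ j, Measure.map (η j) μ₂ = gaussianReal 0 1)
    (a : (Fin k → Fin n) → ℝ)
    (hsym : ∀ j : Fin k → Fin n, Function.Injective j →
      ∀ π : Equiv.Perm (Fin k), a (j ∘ π) = a j)
    (M : ℕ) (hM : 0 < M) :
    ∫ ω, (∑ j ∈ univ.filter (fun j : Fin k → Fin n => Function.Injective j),
        a j * ∏ l, ε (j l) ω) ^ (2 * M) ∂μ₁
      ≤ ∫ ω, (∑ j ∈ univ.filter (fun j : Fin k → Fin n => Function.Injective j),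
          |a j| * ∏ l, η (j l) ω) ^ (2 * M) ∂μ₂ :=
  rademacher_moment_le_gaussian_moment_general k n μ₁ μ₂ ε hεmeas hεindep hrad η hηmeas hηindep
    hgauss a M
end

section
/- Let k be a positive integer, let V > 0, and let Z be a real random variable such that E[Z^{2M}] ≤ 1·3·5⋯(2kM−1)·V^{2M} for every positive integer M. Then there exists a constant A > 0, depending only on k, such that P(|Z| > u) ≤ A·exp(−(1/2)·(u/V)^{2/k}) for all u ≥ 0. -/
open MeasureTheory ProbabilityTheory Real
open scoped Nat

/-! Markov's inequality for the moment of order `2M` bounds `P(|Z| > u)` by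
`(2kM-1)‼ (V/u)^{2M} = (2n-1)‼ / t^n`, where `n = kM` and `t = (u/V)^{2/k}`.
Stirling's formula gives `(2n-1)‼ = (2n)! / (2^n n!) ≤ e (2n/e)^n`, so choosing `M` with
`2n ≤ t < 2n + 2k` makes this at most `e^{1-n} ≤ e^{k+1} e^{-t/2}`. For `t < 2k` the bound
`e^{k+1} e^{-t/2}` already exceeds `1`. -/

theorem Nat.factorial_two_mul_eq_mul_doubleFactorial (n : ℕ) :
    (2 * n)! = 2 ^ n * n ! * (2 * n - 1)‼ := by
  cases n with
  | zero => rfl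
  | succ n =>
    rw [show 2 * (n + 1) = 2 * n + 1 + 1 by ring, Nat.factorial_eq_mul_doubleFactorial,
      show 2 * n + 1 + 1 = 2 * (n + 1) by ring, Nat.doubleFactorial_two_mul,
      show 2 * (n + 1) - 1 = 2 * n + 1 by omega]

theorem Stirling.factorial_le_exp_one_mul_sqrt_mul_pow {n : ℕ} (hn : n ≠ 0) :
    (n ! : ℝ) ≤ exp 1 * √n * (n / exp 1) ^ n := by
  have hseq : stirlingSeq n ≤ exp 1 / √2 := by
    obtain ⟨m, rfl⟩ := Nat.exists_eq_succ_of_ne_zero hn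
    simpa [stirlingSeq_one] using stirlingSeq'_antitone (Nat.zero_le m)
  rw [stirlingSeq, div_le_iff₀ (by positivity)] at hseq
  calc (n ! : ℝ) ≤ exp 1 / √2 * (√(2 * n) * (n / exp 1) ^ n) := hseq
    _ = exp 1 * √n * (n / exp 1) ^ n := by
      rw [sqrt_mul zero_le_two]
      field_simp

theorem doubleFactorial_two_mul_sub_one_le (n : ℕ) :
    ((2 * n - 1)‼ : ℝ) ≤ exp 1 * (2 * n / exp 1) ^ n := by
  obtain rfl | hn := eq_or_ne n 0
  · simp [one_le_exp zero_le_one]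
  have hupper := Stirling.factorial_le_exp_one_mul_sqrt_mul_pow (n := 2 * n) (by positivity)
  have hlower : √(2 * n) * (n / exp 1) ^ n ≤ n ! :=
    le_trans (by gcongr; nlinarith [pi_gt_three]) (Stirling.le_factorial_stirling n)
  have hfac : ((2 * n)! : ℝ) = 2 ^ n * n ! * (2 * n - 1)‼ := by
    exact_mod_cast Nat.factorial_two_mul_eq_mul_doubleFactorial n
  refine le_of_mul_le_mul_left ?_ (by positivity : (0 : ℝ) < 2 ^ n * n !)
  calc 2 ^ n * n ! * ((2 * n - 1)‼ : ℝ) = (2 * n)! := hfac.symm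
    _ ≤ exp 1 * √(2 * n) * (2 * n / exp 1) ^ (2 * n) := by exact_mod_cast hupper
    _ = 2 ^ n * (√(2 * n) * (n / exp 1) ^ n) * (exp 1 * (2 * n / exp 1) ^ n) := by
      rw [pow_mul', sq, mul_div_assoc, mul_pow]; ring
    _ ≤ 2 ^ n * n ! * (exp 1 * (2 * n / exp 1) ^ n) := by gcongr

theorem measure_lt_abs_le_integral_pow_div {Ω : Type*} [MeasurableSpace Ω] {μ : Measure Ω}
    [IsFiniteMeasure μ] {Z : Ω → ℝ} {p : ℕ} (hp : Even p)
    (hint : Integrable (fun ω => Z ω ^ p) μ) {u : ℝ} (hu : 0 < u) :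
    μ {ω | u < |Z ω|} ≤ ENNReal.ofReal ((∫ ω, Z ω ^ p ∂μ) / u ^ p) := by
  have hsub : {ω | u < |Z ω|} ⊆ {ω | u ^ p ≤ Z ω ^ p} := fun ω hω => by
    have := pow_le_pow_left₀ hu.le (le_of_lt hω) p
    rwa [hp.pow_abs] at this
  have hmarkov := mul_meas_ge_le_integral_of_nonneg
    (Filter.Eventually.of_forall fun ω => hp.pow_nonneg (Z ω)) hint (u ^ p)
  calc μ {ω | u < |Z ω|} ≤ μ {ω | u ^ p ≤ Z ω ^ p} := measure_mono hsub
    _ = ENNReal.ofReal (μ.real {ω | u ^ p ≤ Z ω ^ p}) :=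
      (ofReal_measureReal (measure_ne_top μ _)).symm
    _ ≤ _ := ENNReal.ofReal_le_ofReal <| by
      rw [le_div_iff₀ (by positivity), mul_comm]; exact hmarkov

theorem doubleFactorial_two_mul_sub_one_div_pow_le {n : ℕ} {t : ℝ} (ht : 2 * n ≤ t) :
    ((2 * n - 1)‼ : ℝ) / t ^ n ≤ exp (1 - n) := by
  obtain rfl | hn := eq_or_ne n 0
  · simp [one_le_exp zero_le_one]
  have ht0 : 0 < t := lt_of_lt_of_le (by positivity) ht
  rw [div_le_iff₀ (by positivity)]
  calc ((2 * n - 1)‼ : ℝ) ≤ exp 1 * (2 * n / exp 1) ^ n := doubleFactorial_two_mul_sub_one_le n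
    _ ≤ exp 1 * (t / exp 1) ^ n := by gcongr
    _ = exp (1 - n) * t ^ n := by
      rw [div_pow, ← exp_nat_mul, exp_sub, mul_one]; ring

theorem exists_pos_nat_mul_le_lt {c t : ℝ} (hc : 0 < c) (ht : c ≤ t) :
    ∃ M : ℕ, 0 < M ∧ c * M ≤ t ∧ t < c * M + c := by
  refine ⟨⌊t / c⌋₊, Nat.floor_pos.2 ((one_le_div hc).2 ht), ?_, ?_⟩
  · rw [mul_comm, ← le_div_iff₀ hc]; exact Nat.floor_le (div_nonneg (hc.le.trans ht) hc.le)
  · rw [← mul_add_one, mul_comm, ← div_lt_iff₀ hc]; exact Nat.lt_floor_add_one _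

theorem rpow_natCast_div_pow_mul {x : ℝ} (hx : 0 ≤ x) (m : ℕ) {k : ℕ} (hk : k ≠ 0) (M : ℕ) :
    (x ^ ((m : ℝ) / k)) ^ (k * M) = x ^ (m * M) := by
  rw [← rpow_natCast, ← rpow_mul hx, ← rpow_natCast]
  congr 1
  push_cast
  field_simp

/-- **From moments to tails.** If `Z` is a real random variable with
`E[Z^{2M}] ≤ (2kM-1)‼ · V^{2M}` for every positive integer `M` (with `V > 0`), then
`P(|Z| > u) ≤ A · exp(-(1/2)(u/V)^{2/k})` for all `u ≥ 0`, where `A > 0` depends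
only on `k`. -/
theorem tail_bound_of_moment_bound (k : ℕ) (hk : 0 < k) :
    ∃ A : ℝ, 0 < A ∧
      ∀ (Ω : Type) (mΩ : MeasurableSpace Ω) (μ : Measure Ω), IsProbabilityMeasure μ →
      ∀ (Z : Ω → ℝ), Measurable Z →
      ∀ (V : ℝ), 0 < V →
        (∀ M : ℕ, 0 < M → Integrable (fun ω => Z ω ^ (2 * M)) μ) →
        (∀ M : ℕ, 0 < M →
          ∫ ω, Z ω ^ (2 * M) ∂μ ≤ (Nat.doubleFactorial (2 * k * M - 1) : ℝ) * V ^ (2 * M)) →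
      ∀ u : ℝ, 0 ≤ u →
        μ {ω | u < |Z ω|}
          ≤ ENNReal.ofReal (A * Real.exp (-(1/2) * (u / V) ^ ((2 : ℝ) / (k : ℝ)))) := by
  refine ⟨exp (k + 1), exp_pos _, fun Ω _ μ _ Z _ V hV hint hmom u hu => ?_⟩
  set t := (u / V) ^ ((2 : ℝ) / k) with ht_def
  rcases lt_or_ge t (2 * k) with ht | ht
  · calc μ {ω | u < |Z ω|} ≤ 1 := prob_le_one
      _ ≤ _ := by
        rw [← ENNReal.ofReal_one, ← exp_add]
        exact ENNReal.ofReal_le_ofReal (one_le_exp (by linarith))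
  obtain ⟨M, hM, hMt, htM⟩ := exists_pos_nat_mul_le_lt (by positivity) ht
  have ht0 : 0 < t := lt_of_lt_of_le (by positivity) ht
  have hu0 : 0 < u := hu.lt_of_ne fun hu0 => by simp [ht_def, ← hu0, hk.ne'] at ht0
  have htpow : t ^ (k * M) = (u / V) ^ (2 * M) :=
    mod_cast rpow_natCast_div_pow_mul (div_nonneg hu hV.le) 2 hk.ne' M
  calc μ {ω | u < |Z ω|} ≤ ENNReal.ofReal ((∫ ω, Z ω ^ (2 * M) ∂μ) / u ^ (2 * M)) :=
        measure_lt_abs_le_integral_pow_div (even_two_mul M) (hint M hM) hu0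
    _ ≤ ENNReal.ofReal ((2 * (k * M) - 1)‼ / t ^ (k * M)) := by
        refine ENNReal.ofReal_le_ofReal ?_
        rw [htpow, div_pow, div_div_eq_mul_div, ← mul_assoc]
        gcongr
        exact mul_assoc 2 k M ▸ hmom M hM
    _ ≤ ENNReal.ofReal (exp (1 - (k * M : ℕ))) :=
        ENNReal.ofReal_le_ofReal <|
          doubleFactorial_two_mul_sub_one_div_pow_le (by push_cast; linarith)
    _ ≤ _ := by
        refine ENNReal.ofReal_le_ofReal ?_
        rw [← exp_add]
        gcongr
        push_cast
        linarith
end
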